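/- arXiv:2210.15243 — 3 statements merged into one kernel-verified Lean document; each statement's English description precedes it below -/
import Mathlib

section
/- If the constraint gradients {∇u_j(x*)} ∪ {∇v_l(x*) : l active} are linearly independent (LICQ), then the normal cone to the set D = {x : u_j(x) = 0 ∀j, v_l(x) ≤ 0 ∀l} at x* is exactly the set of linear combinations Σ_j μ_j ∇u_j(x*) + Σ_{l active} λ_l ∇v_l(x*) with λ_l ≥ 0. -/
/-!
A direction `d` with `⟪∇u_j, d⟫ = 0` and `⟪∇v_l, d⟫ ≤ 0` for the active `l` is tangent to `D`:
LICQ makes the derivative of the active constraint map `F` surjective, so by the implicit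
function theorem there is a curve `γ` leaving `x*` with velocity `d` along which `F ∘ γ` moves
on the ray through `F' d`. A Fréchet normal has nonpositive inner product with every such
velocity, and for linearly independent gradients this "Farkas" condition forces it to be a
combination of the gradients with nonnegative weights on the inequality constraints.
Conversely such a combination is the gradient of `Σ μ_j u_j + Σ λ_l v_l`, which is maximized on
`D` at `x*`.
-/

/-- The regular (Fréchet) normal cone to `D` at `x` (under LICQ it coincides with
the limiting normal cone), in ε-δ form. -/
def frechetNormalCone {V : Type*} [NormedAddCommGroup V] [InnerProductSpace ℝ V]
    (D : Set V) (x : V) : Set V :=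
  {v | ∀ ε > (0 : ℝ), ∃ δ > (0 : ℝ), ∀ y ∈ D, ‖y - x‖ < δ →
    (inner ℝ v (y - x) : ℝ) ≤ ε * ‖y - x‖}

open Filter Set Topology
open scoped RealInnerProductSpace Matrix

theorem HasDerivAt.eventually_lt_right_of_pos {f : ℝ → ℝ} {f' a : ℝ} (hf : HasDerivAt f f' a)
    (hf' : 0 < f') : ∀ᶠ t in 𝓝[>] a, f a < f t := by
  filter_upwards [((hasDerivAt_iff_tendsto_slope.mp hf).mono_left (nhdsGT_le_nhdsNE a)).eventually
    (eventually_gt_nhds hf'), self_mem_nhdsWithin] with t hslope (ht : a < t)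
  exact (slope_pos_iff_of_le ht.le).mp hslope

theorem HasStrictFDerivAt.exists_curve_map_eq_add_smul {E F : Type*} [NormedAddCommGroup E]
    [NormedSpace ℝ E] [CompleteSpace E] [NormedAddCommGroup F] [NormedSpace ℝ F]
    [FiniteDimensional ℝ F] {f : E → F} {f' : E →L[ℝ] F} {x : E} (hf : HasStrictFDerivAt f f' x)
    (hf' : f'.range = ⊤) (d : E) :
    ∃ γ : ℝ → E, γ 0 = x ∧ HasDerivAt γ d 0 ∧
      ∀ᶠ τ in 𝓝[>] 0, ∃ t > (0 : ℝ), f (γ τ) = f x + t • f' d := by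
  -- Follow the level set of `G` through `(x, 0)` in the kernel direction `(d, 1)` of `G'`.
  set G : E × ℝ → F := fun p ↦ f p.1 - p.2 • f' d
  set G' : E × ℝ →L[ℝ] F := f' ∘L .fst ℝ E ℝ - (ContinuousLinearMap.snd ℝ E ℝ).smulRight (f' d)
  have hG : HasStrictFDerivAt G G' (x, 0) :=
    (hf.comp (x, 0) hasStrictFDerivAt_fst).sub (hasStrictFDerivAt_snd.smul_const (f' d))
  have hG' : G'.range = ⊤ := by
    refine LinearMap.range_eq_top.mpr fun z ↦ ?_
    obtain ⟨h, rfl⟩ := LinearMap.range_eq_top.mp hf' z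
    exact ⟨(h, 0), by simp [G']⟩
  let k : G'.ker := ⟨(d, 1), by simp [G']⟩
  set c : ℝ → E × ℝ := fun τ ↦ hG.implicitFunction G G' hG' (G (x, 0)) (τ • k)
  have hk : HasDerivAt (fun τ : ℝ ↦ τ • k) k 0 := by
    simpa using (hasDerivAt_id (0 : ℝ)).smul_const k
  have hc : HasDerivAt c (d, 1) 0 :=
    (hG.to_implicitFunction hG').hasFDerivAt.comp_hasDerivAt_of_eq 0 hk (by simp)
  have hc0 : c 0 = (x, 0) := by simp [c]
  have hGc : ∀ᶠ τ in 𝓝 0, G (c τ) = G (x, 0) :=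
    (tendsto_const_nhds.prodMk_nhds (by simpa using hk.continuousAt.tendsto)).eventually
      (hG.map_implicitFunction_eq hG')
  have hpos : ∀ᶠ τ in 𝓝[>] 0, 0 < (c τ).2 := by
    simpa [hc0] using (hasFDerivAt_snd.comp_hasDerivAt 0 hc).eventually_lt_right_of_pos one_pos
  refine ⟨fun τ ↦ (c τ).1, by simp [hc0], hasFDerivAt_fst.comp_hasDerivAt (f := c) 0 hc, ?_⟩
  filter_upwards [hpos, hGc.filter_mono nhdsWithin_le_nhds] with τ hτ hGτ
  refine ⟨(c τ).2, hτ, ?_⟩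
  simpa [G, sub_eq_iff_eq_add] using hGτ

section InnerProductSpace

variable {E : Type*} [NormedAddCommGroup E] [InnerProductSpace ℝ E] {ι κ : Type*} [Fintype ι]
  [Fintype κ] {D : Set E} {x w : E}

theorem LinearIndependent.exists_inner_eq {g : ι → E} (hg : LinearIndependent ℝ g)
    (t : ι → ℝ) : ∃ d : E, ∀ i, ⟪g i, d⟫ = t i := by
  classical
  set G := Matrix.gram ℝ g
  have hG : IsUnit G.det :=
    isUnit_iff_ne_zero.mpr (Matrix.det_gram_ne_zero_iff_linearIndependent.mpr hg)
  refine ⟨∑ j, (G⁻¹ *ᵥ t) j • g j, fun i ↦ ?_⟩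
  have : ⟪g i, ∑ j, (G⁻¹ *ᵥ t) j • g j⟫ = (G *ᵥ (G⁻¹ *ᵥ t)) i := by
    simp [G, inner_sum, inner_smul_right, Matrix.mulVec, dotProduct, Matrix.gram_apply, mul_comm]
  rw [this, Matrix.mulVec_mulVec, Matrix.mul_nonsing_inv _ hG, Matrix.one_mulVec]

theorem LinearIndependent.exists_eq_sum_of_inner_nonpos {g : ι → E} {h : κ → E}
    (hgh : LinearIndependent ℝ (Sum.elim g h))
    (hw : ∀ d, (∀ i, ⟪g i, d⟫ = 0) → (∀ k, ⟪h k, d⟫ ≤ 0) → ⟪w, d⟫ ≤ 0) :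
    ∃ μ : ι → ℝ, ∃ lam : κ → ℝ, (∀ k, 0 ≤ lam k) ∧ w = ∑ i, μ i • g i + ∑ k, lam k • h k := by
  classical
  set K := Submodule.span ℝ (range (Sum.elim g h))
  have : FiniteDimensional ℝ K := FiniteDimensional.span_of_finite ℝ (finite_range _)
  -- Directions orthogonal to every `g i` and `h k` are admissible with both signs.
  have hwK : w ∈ K := by
    rw [← K.orthogonal_orthogonal, Submodule.mem_orthogonal]
    intro q hq
    have hgq : ∀ i, ⟪g i, q⟫ = 0 := fun i ↦ Submodule.inner_right_of_mem_orthogonal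
      (Submodule.subset_span (mem_range_self (Sum.inl i))) hq
    have hhq : ∀ k, ⟪h k, q⟫ = 0 := fun k ↦ Submodule.inner_right_of_mem_orthogonal
      (Submodule.subset_span (mem_range_self (Sum.inr k))) hq
    have h₁ := hw q hgq fun k ↦ (hhq k).le
    have h₂ := hw (-q) (by simp [hgq]) (by simp [hhq])
    rw [inner_neg_right] at h₂
    rw [real_inner_comm]
    linarith
  obtain ⟨c, rfl⟩ := (Submodule.mem_span_range_iff_exists_fun ℝ).mp hwK
  refine ⟨c ∘ .inl, c ∘ .inr, fun k ↦ ?_, Fintype.sum_sum_type _⟩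
  obtain ⟨d, hd⟩ := hgh.exists_inner_eq (Pi.single (.inr k) (-1))
  have := hw d (fun i ↦ (hd (.inl i)).trans (by simp)) fun k' ↦
    (hd (.inr k')).trans_le (by rw [Pi.single_apply]; split_ifs <;> norm_num)
  rw [sum_inner] at this
  simpa [inner_smul_left, hd, Pi.single_apply] using this

theorem inner_nonpos_of_mem_frechetNormalCone {γ : ℝ → E} {d : E}
    (hw : w ∈ frechetNormalCone D x) (hγ : HasDerivAt γ d 0) (hγ0 : γ 0 = x)
    (hγD : ∀ᶠ τ in 𝓝[>] 0, γ τ ∈ D) : ⟪w, d⟫ ≤ 0 := by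
  have hslope : Tendsto (fun τ : ℝ ↦ τ⁻¹ • (γ τ - x)) (𝓝[>] 0) (𝓝 d) := by
    simpa [hγ0] using hγ.tendsto_slope_zero_right
  have hγx : Tendsto γ (𝓝[>] 0) (𝓝 x) :=
    hγ0 ▸ hγ.continuousAt.tendsto.mono_left nhdsWithin_le_nhds
  have hε : ∀ ε > 0, ⟪w, d⟫ ≤ ε * ‖d‖ := by
    intro ε hε
    obtain ⟨δ, hδ, hwδ⟩ := hw ε hε
    refine le_of_tendsto_of_tendsto (tendsto_const_nhds.inner hslope)
      (hslope.norm.const_mul ε) ?_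
    filter_upwards [hγD, hγx.eventually (Metric.ball_mem_nhds x hδ), self_mem_nhdsWithin]
      with τ hτD hτδ (hτ : 0 < τ)
    rw [dist_eq_norm] at hτδ
    rw [inner_smul_right, norm_smul, Real.norm_of_nonneg (inv_nonneg.mpr hτ.le), mul_left_comm]
    exact mul_le_mul_of_nonneg_left (hwδ _ hτD hτδ) (inv_nonneg.mpr hτ.le)
  have hlim : Tendsto (fun ε : ℝ ↦ ε * ‖d‖) (𝓝[>] 0) (𝓝 0) :=
    ((continuous_mul_const ‖d‖).tendsto' 0 0 (zero_mul _)).mono_left nhdsWithin_le_nhds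
  exact ge_of_tendsto hlim (eventually_nhdsWithin_of_forall hε)

variable [CompleteSpace E]

theorem IsLocalMaxOn.mem_frechetNormalCone {f : E → ℝ} (hmax : IsLocalMaxOn f D x)
    (hf : HasGradientAt f w x) : w ∈ frechetNormalCone D x := by
  intro ε hε
  obtain ⟨δ, hδ, hball⟩ := Metric.eventually_nhds_iff.mp
    (((hasGradientAt_iff_isLittleO.mp hf).def hε).and (eventually_nhdsWithin_iff.mp hmax))
  refine ⟨δ, hδ, fun y hy hyx ↦ ?_⟩
  obtain ⟨hy_lin, hy_max⟩ := hball (by rwa [dist_eq_norm])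
  have := (abs_le.mp (Real.norm_eq_abs _ ▸ hy_lin)).1
  linarith [hy_max hy]

theorem hasGradientAt_sum_mul (a : ι → ℝ) {c : ι → E → ℝ}
    (hc : ∀ i, DifferentiableAt ℝ (c i) x) :
    HasGradientAt (fun y ↦ ∑ i, a i * c i y) (∑ i, a i • gradient (c i) x) x := by
  rw [hasGradientAt_iff_hasFDerivAt, map_sum]
  simp_rw [map_smul, toDual_gradient]
  exact HasFDerivAt.fun_sum fun i _ ↦ (hc i).hasFDerivAt.const_mul (a i)

theorem sum_smul_gradient_mem_frechetNormalCone {u : ι → E → ℝ} {v : κ → E → ℝ}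
    (hu : ∀ i, DifferentiableAt ℝ (u i) x) (hv : ∀ k, DifferentiableAt ℝ (v k) x)
    (hux : ∀ i, u i x = 0) (μ : ι → ℝ) {lam : κ → ℝ} (hlam : ∀ k, 0 ≤ lam k)
    (hslack : ∀ k, v k x ≠ 0 → lam k = 0) :
    ∑ i, μ i • gradient (u i) x + ∑ k, lam k • gradient (v k) x ∈
      frechetNormalCone {y | (∀ i, u i y = 0) ∧ ∀ k, v k y ≤ 0} x := by
  have hgrad := hasGradientAt_sum_mul (Sum.elim μ lam) (c := Sum.elim u v)
    (by rintro (i | k); exacts [hu i, hv k])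
  simp only [Fintype.sum_sum_type, Sum.elim_inl, Sum.elim_inr] at hgrad
  refine IsLocalMaxOn.mem_frechetNormalCone (IsMaxOn.localize fun y ⟨hyu, hyv⟩ ↦ ?_) hgrad
  have hslack' : ∀ k, lam k * v k x = 0 := fun k ↦ by
    by_cases h : v k x = 0 <;> simp [h, hslack]
  simp only [mem_ofPred_eq, hyu, hux, hslack', mul_zero, Finset.sum_const_zero, zero_add]
  exact Finset.sum_nonpos fun k _ ↦ mul_nonpos_of_nonneg_of_nonpos (hlam k) (hyv k)

theorem exists_eq_sum_gradient_of_mem_frechetNormalCone {φ : ι → E → ℝ} {ψ : κ → E → ℝ}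
    (hφ : ∀ i, ContDiffAt ℝ 1 (φ i) x) (hψ : ∀ k, ContDiffAt ℝ 1 (ψ k) x)
    (hφx : ∀ i, φ i x = 0) (hψx : ∀ k, ψ k x = 0)
    (hD : ∀ᶠ y in 𝓝 x, (∀ i, φ i y = 0) → (∀ k, ψ k y ≤ 0) → y ∈ D)
    (hLI : LinearIndependent ℝ (Sum.elim (fun i ↦ gradient (φ i) x) fun k ↦ gradient (ψ k) x))
    (hw : w ∈ frechetNormalCone D x) :
    ∃ μ : ι → ℝ, ∃ lam : κ → ℝ, (∀ k, 0 ≤ lam k) ∧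
      w = ∑ i, μ i • gradient (φ i) x + ∑ k, lam k • gradient (ψ k) x := by
  set F : E → EuclideanSpace ℝ (ι ⊕ κ) :=
    fun y ↦ WithLp.toLp 2 (Sum.elim (fun i ↦ φ i y) fun k ↦ ψ k y)
  set F' : E →L[ℝ] EuclideanSpace ℝ (ι ⊕ κ) :=
    (PiLp.continuousLinearEquiv 2 ℝ fun _ ↦ ℝ).symm.toContinuousLinearMap ∘L
      .pi (Sum.elim (fun i ↦ fderiv ℝ (φ i) x) fun k ↦ fderiv ℝ (ψ k) x)
  have hF'_apply : ∀ d s, F' d s =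
      ⟪Sum.elim (fun i ↦ gradient (φ i) x) (fun k ↦ gradient (ψ k) x) s, d⟫ := by
    rintro d (i | k) <;> exact inner_gradient_left.symm
  have hF : HasStrictFDerivAt F F' x := (hasStrictFDerivAt_piLp _).mpr <| by
    rintro (i | k)
    exacts [(hφ i).hasStrictFDerivAt one_ne_zero, (hψ k).hasStrictFDerivAt one_ne_zero]
  have hF' : F'.range = ⊤ := by
    refine LinearMap.range_eq_top.mpr fun z ↦ ?_
    obtain ⟨d, hd⟩ := hLI.exists_inner_eq z
    exact ⟨d, PiLp.ext fun s ↦ (hF'_apply d s).trans (hd s)⟩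
  refine hLI.exists_eq_sum_of_inner_nonpos fun d hd_eq hd_le ↦ ?_
  obtain ⟨γ, hγ0, hγ, hγF⟩ := hF.exists_curve_map_eq_add_smul hF' d
  refine inner_nonpos_of_mem_frechetNormalCone hw hγ hγ0 ?_
  have hγx : Tendsto γ (𝓝[>] 0) (𝓝 x) :=
    hγ0 ▸ hγ.continuousAt.tendsto.mono_left nhdsWithin_le_nhds
  filter_upwards [hγF, hγx.eventually hD] with τ ⟨t, ht, hFt⟩ hτD
  have hFγ : ∀ s, F (γ τ) s = t * F' d s := fun s ↦ by
    simpa [F, hφx, hψx] using congrArg (· s) hFt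
  refine hτD (fun i ↦ ?_) fun k ↦ ?_
  · simpa [F, hF'_apply, hd_eq] using hFγ (.inl i)
  · simpa [F, hF'_apply] using (hFγ (.inr k)).trans_le
      (mul_nonpos_of_nonneg_of_nonpos ht.le ((hF'_apply d _).trans_le (hd_le k)))

theorem exists_multipliers_of_mem_frechetNormalCone {u : ι → E → ℝ} {v : κ → E → ℝ}
    (hu : ∀ i, ContDiffAt ℝ 1 (u i) x) (hv : ∀ k, ContDiffAt ℝ 1 (v k) x)
    (hx : x ∈ {y | (∀ i, u i y = 0) ∧ ∀ k, v k y ≤ 0})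
    (hLICQ : LinearIndependent ℝ
      (Sum.elim (fun i ↦ gradient (u i) x) fun k : {k // v k x = 0} ↦ gradient (v k) x))
    (hw : w ∈ frechetNormalCone {y | (∀ i, u i y = 0) ∧ ∀ k, v k y ≤ 0} x) :
    ∃ μ : ι → ℝ, ∃ lam : κ → ℝ, (∀ k, 0 ≤ lam k) ∧ (∀ k, v k x ≠ 0 → lam k = 0) ∧
      w = ∑ i, μ i • gradient (u i) x + ∑ k, lam k • gradient (v k) x := by
  classical
  obtain ⟨hux, hvx⟩ := hx
  have hinactive : ∀ᶠ y in 𝓝 x, ∀ k, v k x ≠ 0 → v k y < 0 :=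
    eventually_all.mpr fun k ↦ eventually_imp_distrib_left.mpr fun h ↦
      (hv k).continuousAt.eventually_lt continuousAt_const ((hvx k).lt_of_ne h)
  obtain ⟨μ, lam, hlam, rfl⟩ := exists_eq_sum_gradient_of_mem_frechetNormalCone
    (D := {y | (∀ i, u i y = 0) ∧ ∀ k, v k y ≤ 0}) (ψ := fun k : {k // v k x = 0} ↦ v k)
    hu (fun k ↦ hv k) hux (fun k ↦ k.2)
    (hinactive.mono fun y hy hyu hyv ↦
      ⟨hyu, fun k ↦ if h : v k x = 0 then hyv ⟨k, h⟩ else (hy k h).le⟩) hLICQ hw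
  refine ⟨μ, fun k ↦ if h : v k x = 0 then lam ⟨k, h⟩ else 0, fun k ↦ ?_, fun k hk ↦ dif_neg hk,
    ?_⟩
  · dsimp only
    split_ifs
    exacts [hlam _, le_rfl]
  · have hactive : ∀ k : {k // v k x = 0},
        (if h : v k x = 0 then lam ⟨k, h⟩ else 0) • gradient (v k) x = lam k • gradient (v k) x :=
      fun k ↦ by rw [dif_pos k.2]
    have hinact : ∀ k : {k // v k x ≠ 0},
        (if h : v k x = 0 then lam ⟨k, h⟩ else 0) • gradient (v k) x = 0 :=
      fun k ↦ by rw [dif_neg k.2, zero_smul]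
    rw [← Fintype.sum_subtype_add_sum_subtype (fun k ↦ v k x = 0)]
    simp only [hactive, hinact, Finset.sum_const_zero, add_zero]

end InnerProductSpace

/-- Under LICQ (linear independence of the gradients of the equality constraints
and of the active inequality constraints), the normal cone to
`D = {x : u_j(x) = 0 ∀j, v_l(x) ≤ 0 ∀l}` at `x*` is exactly the set of linear
combinations `Σ_j μ_j ∇u_j(x*) + Σ_{l active} λ_l ∇v_l(x*)` with `λ_l ≥ 0`. -/
theorem normalCone_of_LICQ
    {n J L : ℕ}
    (u : Fin J → EuclideanSpace ℝ (Fin n) → ℝ)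
    (v : Fin L → EuclideanSpace ℝ (Fin n) → ℝ)
    (hu : ∀ j, ContDiff ℝ 1 (u j)) (hv : ∀ l, ContDiff ℝ 1 (v l))
    (D : Set (EuclideanSpace ℝ (Fin n)))
    (hD : D = {x | (∀ j, u j x = 0) ∧ ∀ l, v l x ≤ 0})
    (xstar : EuclideanSpace ℝ (Fin n)) (hx : xstar ∈ D)
    (hLICQ : LinearIndependent ℝ
      (fun s : Fin J ⊕ {l : Fin L // v l xstar = 0} =>
        Sum.elim (fun j => gradient (u j) xstar)
          (fun l => gradient (v l.1) xstar) s)) :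
    frechetNormalCone D xstar =
      {w | ∃ μ : Fin J → ℝ, ∃ lam : Fin L → ℝ,
        (∀ l, 0 ≤ lam l) ∧ (∀ l, v l xstar ≠ 0 → lam l = 0) ∧
        w = ∑ j, μ j • gradient (u j) xstar +
            ∑ l, lam l • gradient (v l) xstar} := by
  subst hD
  ext w
  refine ⟨fun hw ↦ exists_multipliers_of_mem_frechetNormalCone (fun j ↦ (hu j).contDiffAt)
    (fun l ↦ (hv l).contDiffAt) hx hLICQ hw, ?_⟩
  rintro ⟨μ, lam, hlam, hslack, rfl⟩
  exact sum_smul_gradient_mem_frechetNormalCone (fun j ↦ (hu j).differentiable one_ne_zero _)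
    (fun l ↦ (hv l).differentiable one_ne_zero _) hx.1 μ hlam hslack
end

section
/- Under the generalized LICQ condition, the normal cone of the intersection of a closed set D with a linear subspace L at x* ∈ D ∩ L satisfies N_{D∩L}(x*) ⊆ N_D(x*) + Lᗮ, provided N_D(x*) ∩ (−Lᗮ) = {0}. -/
open Pointwise

/-- The limiting (Mordukhovich) normal cone to `D` at `x`: limits of regular
normals at nearby points of `D`. -/
def limitingNormalCone {V : Type*} [NormedAddCommGroup V] [InnerProductSpace ℝ V]
    (D : Set V) (x : V) : Set V :=
  {v | ∃ xs vs : ℕ → V, (∀ i, xs i ∈ D) ∧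
    (∀ i, vs i ∈ frechetNormalCone D (xs i)) ∧
    Filter.Tendsto xs Filter.atTop (nhds x) ∧
    Filter.Tendsto vs Filter.atTop (nhds v)}

/-!
A regular normal `v` to `D ∩ L` at a point `x` is, up to an arbitrarily small error, the sum of a
regular normal to `D` at a nearby point and a vector of `Lᗮ`: minimise over `D ∩ closedBall x r`
the penalised function `y ↦ -⟪v, y - x⟫ + c‖y - x‖² + ρ‖P_{Lᗮ}(y - x)‖²`. For `ρ` large the
minimiser is not on the boundary sphere, and the first-order condition at it gives the
decomposition, with error `2c(y - x)`.

Passing to the limit along a sequence, a limiting normal to `D ∩ L` is a limit of sums `u k + w k`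
with `u k` regular normals to `D` at points tending to `x*` and `w k ∈ Lᗮ`. If `‖u k‖` were
unbounded, normalising by it would produce a unit vector of `N_D(x*) ∩ (-Lᗮ)`; so a subsequence
of `u k` converges, and then so does the corresponding subsequence of `w k`.
-/

open Filter Topology Metric
open scoped RealInnerProductSpace

theorem IsCompact.exists_forall_pos_add_mul {X : Type*} [TopologicalSpace X] {S : Set X}
    (hS : IsCompact S) {φ q : X → ℝ} (hφ : Continuous φ) (hq : Continuous q)
    (hq0 : ∀ y ∈ S, 0 ≤ q y) (hφq : ∀ y ∈ S, q y = 0 → 0 < φ y) :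
    ∃ ρ, 0 ≤ ρ ∧ ∀ y ∈ S, 0 < φ y + ρ * q y := by
  obtain ⟨M, hM⟩ := hS.bddBelow_image hφ.continuousOn
  have hS' : IsCompact (S ∩ {y | φ y ≤ 0}) := hS.inter_right (isClosed_le hφ continuous_const)
  obtain ⟨m, hm, hqm⟩ := hS'.exists_forall_le' hq.continuousOn fun y ⟨hyS, hφy⟩ =>
    (hq0 y hyS).lt_of_ne fun h => (hφq y hyS h.symm).not_ge hφy
  refine ⟨(|M| + 1) / m, by positivity, fun y hyS => ?_⟩
  rcases le_or_gt (φ y) 0 with hφy | hφy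
  · have hρq : |M| + 1 ≤ (|M| + 1) / m * q y := by
      rw [div_mul_eq_mul_div, le_div_iff₀ hm]
      gcongr
      exact hqm y ⟨hyS, hφy⟩
    linarith [hM ⟨y, hyS, rfl⟩, neg_abs_le M]
  · have := hq0 y hyS
    positivity

section

variable {V : Type*} [NormedAddCommGroup V] [InnerProductSpace ℝ V]

theorem smul_mem_frechetNormalCone {D : Set V} {x v : V} (hv : v ∈ frechetNormalCone D x)
    {c : ℝ} (hc : 0 ≤ c) : c • v ∈ frechetNormalCone D x := by
  intro ε hε
  obtain ⟨δ, hδ, h⟩ := hv (ε / (c + 1)) (by positivity)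
  refine ⟨δ, hδ, fun y hy hyδ => ?_⟩
  have hcε : c * (ε / (c + 1)) ≤ ε := by
    rw [mul_div_assoc', div_le_iff₀ (by positivity)]
    nlinarith
  calc ⟪c • v, y - x⟫ = c * ⟪v, y - x⟫ := real_inner_smul_left _ _ _
    _ ≤ c * (ε / (c + 1) * ‖y - x‖) := by gcongr; exact h y hy hyδ
    _ ≤ ε * ‖y - x‖ := by rw [← mul_assoc]; gcongr

theorem mem_frechetNormalCone_of_isLocalMinOn {D : Set V} {f : V → ℝ} {Y u : V} {C : ℝ}
    (hmin : IsLocalMinOn f D Y) (hf : ∀ y, f y - f Y ≤ -⟪u, y - Y⟫ + C * ‖y - Y‖ ^ 2) :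
    u ∈ frechetNormalCone D Y := by
  intro ε hε
  obtain ⟨m, hm, hball⟩ := Metric.mem_nhdsWithin_iff.mp hmin
  refine ⟨min m (ε / (|C| + 1)), lt_min hm (by positivity), fun y hy hyδ => ?_⟩
  have hfy : f Y ≤ f y := hball ⟨mem_ball_iff_norm.mpr (hyδ.trans_le (min_le_left _ _)), hy⟩
  have hyε : ‖y - Y‖ * (|C| + 1) ≤ ε :=
    (le_div_iff₀ (by positivity)).mp (hyδ.trans_le (min_le_right _ _)).le
  have hC : C * ‖y - Y‖ ^ 2 ≤ |C| * ‖y - Y‖ ^ 2 := by gcongr; exact le_abs_self C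
  nlinarith [hf y, norm_nonneg (y - Y), abs_nonneg C]

noncomputable def quadraticPenalty (K : Submodule ℝ V) [K.HasOrthogonalProjection] (v : V)
    (c ρ : ℝ) (z : V) : ℝ :=
  -⟪v, z⟫ + c * ‖z‖ ^ 2 + ρ * ‖K.starProjection z‖ ^ 2

theorem quadraticPenalty_add (K : Submodule ℝ V) [K.HasOrthogonalProjection] (v : V)
    (c ρ : ℝ) (a h : V) :
    quadraticPenalty K v c ρ (a + h) = quadraticPenalty K v c ρ a
      - ⟪v - (2 * c) • a - (2 * ρ) • K.starProjection a, h⟫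
      + c * ‖h‖ ^ 2 + ρ * ‖K.starProjection h‖ ^ 2 := by
  have hproj : ⟪K.starProjection a, K.starProjection h⟫ = ⟪K.starProjection a, h⟫ := by
    rw [← Submodule.inner_starProjection_left_eq_right,
      K.starProjection_eq_self_iff.mpr (K.starProjection_apply_mem a)]
  simp only [quadraticPenalty, map_add, norm_add_sq_real, inner_add_right, inner_sub_left,
    real_inner_smul_left, hproj]
  ring

theorem exists_isLocalMinOn_quadraticPenalty [ProperSpace V] {D : Set V} (hD : IsClosed D)
    (K : Submodule ℝ V) [K.HasOrthogonalProjection] {x v : V} (hxD : x ∈ D) {c r : ℝ}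
    (hr : 0 < r) (hv : ∀ y ∈ D, y - x ∈ Kᗮ → ‖y - x‖ = r → ⟪v, y - x⟫ < c * r ^ 2) :
    ∃ ρ, 0 ≤ ρ ∧ ∃ Y ∈ D, ‖Y - x‖ < r ∧
      IsLocalMinOn (fun y => quadraticPenalty K v c ρ (y - x)) D Y := by
  obtain ⟨ρ, hρ, hsphere⟩ := ((isCompact_sphere x r).inter_left hD).exists_forall_pos_add_mul
    (φ := fun y => -⟪v, y - x⟫ + c * ‖y - x‖ ^ 2) (q := fun y => ‖K.starProjection (y - x)‖ ^ 2)
    (by fun_prop) (by fun_prop) (fun _ _ => by positivity) fun y ⟨hyD, hy⟩ hQ => by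
      rw [mem_sphere_iff_norm] at hy
      have hyK : y - x ∈ Kᗮ := (K.starProjection_apply_eq_zero_iff).mp <|
        norm_eq_zero.mp (pow_eq_zero_iff two_ne_zero |>.mp hQ)
      have := hv y hyD hyK hy
      rw [hy]
      linarith
  set f := fun y => quadraticPenalty K v c ρ (y - x)
  have hxB : x ∈ D ∩ closedBall x r := ⟨hxD, mem_closedBall_self hr.le⟩
  obtain ⟨Y, ⟨hYD, hYr⟩, hYmin⟩ := ((isCompact_closedBall x r).inter_left hD).exists_isMinOn
    ⟨x, hxB⟩ (by unfold f quadraticPenalty; fun_prop : Continuous f).continuousOn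
  have hYx : ‖Y - x‖ < r := by
    refine (mem_closedBall_iff_norm.mp hYr).lt_of_ne fun h => ?_
    have hfY : f Y ≤ f x := hYmin hxB
    have := hsphere Y ⟨hYD, mem_sphere_iff_norm.mpr h⟩
    simp only [f, quadraticPenalty, sub_self, inner_zero_right, norm_zero, map_zero] at hfY
    linarith
  have hball : closedBall x r ∈ 𝓝[D] Y :=
    mem_nhdsWithin_of_mem_nhds (closedBall_mem_nhds_of_mem (mem_ball_iff_norm.mpr hYx))
  refine ⟨ρ, hρ, Y, hYD, hYx, ?_⟩
  simpa [IsLocalMinOn, nhdsWithin_inter_of_mem' hball] using hYmin.localize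

section FiniteDimensional

variable [FiniteDimensional ℝ V]

theorem exists_approx_of_mem_frechetNormalCone_inter {D : Set V} (hD : IsClosed D)
    (L : Submodule ℝ V) {x v : V} (hxD : x ∈ D) (hxL : x ∈ L)
    (hv : v ∈ frechetNormalCone (D ∩ (L : Set V)) x) {ε r : ℝ} (hε : 0 < ε) (hr : 0 < r) :
    ∃ y ∈ D, ‖y - x‖ ≤ r ∧ ∃ u ∈ frechetNormalCone D y, ∃ w ∈ Lᗮ, ‖v - (u + w)‖ ≤ ε := by
  obtain ⟨δ, hδ, hvδ⟩ := hv (ε / 4) (by positivity)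
  set r' := min r (δ / 2)
  have hr' : 0 < r' := lt_min hr (by positivity)
  -- `c` makes the final error `2c‖Y - x‖` at most `ε`, and beats `ε / 4` on the sphere
  set c := ε / (2 * r')
  have hc_error : 2 * c * r' = ε := by simp only [c]; field_simp
  have hc_sphere : c * r' ^ 2 = ε / 2 * r' := by simp only [c]; field_simp
  obtain ⟨ρ, hρ, Y, hYD, hYx, hlocal⟩ := exists_isLocalMinOn_quadraticPenalty hD Lᗮ hxD hr'
    (c := c) (v := v) fun y hyD hyL hy => by
      rw [L.orthogonal_orthogonal] at hyL
      have := hvδ y ⟨hyD, by simpa using L.add_mem hyL hxL⟩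
        (by rw [hy]; exact (min_le_right _ _).trans_lt (by linarith))
      rw [hy] at this
      nlinarith
  have hfY : ∀ y, quadraticPenalty Lᗮ v c ρ (y - x) - quadraticPenalty Lᗮ v c ρ (Y - x) ≤
      -⟪v - (2 * c) • (Y - x) - (2 * ρ) • Lᗮ.starProjection (Y - x), y - Y⟫
        + (c + ρ) * ‖y - Y‖ ^ 2 := fun y => by
    have hQ : ρ * ‖Lᗮ.starProjection (y - Y)‖ ^ 2 ≤ ρ * ‖y - Y‖ ^ 2 := by
      gcongr; exact Lᗮ.norm_starProjection_apply_le _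
    have := quadraticPenalty_add Lᗮ v c ρ (Y - x) (y - Y)
    rw [sub_add_sub_cancel'] at this
    linarith
  refine ⟨Y, hYD, hYx.le.trans (min_le_left _ _), _,
    mem_frechetNormalCone_of_isLocalMinOn hlocal hfY, (2 * ρ) • Lᗮ.starProjection (Y - x),
    Lᗮ.smul_mem _ (Lᗮ.starProjection_apply_mem _), ?_⟩
  calc ‖_‖ = ‖(2 * c) • (Y - x)‖ := by congr 1; abel
    _ = 2 * c * ‖Y - x‖ := by rw [norm_smul, Real.norm_of_nonneg (by positivity)]
    _ ≤ 2 * c * r' := by gcongr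
    _ = ε := hc_error

theorem exists_seq_of_mem_limitingNormalCone_inter {D : Set V} (hD : IsClosed D)
    (L : Submodule ℝ V) {x v : V} (hv : v ∈ limitingNormalCone (D ∩ (L : Set V)) x) :
    ∃ y u w : ℕ → V, (∀ k, y k ∈ D) ∧ (∀ k, u k ∈ frechetNormalCone D (y k)) ∧
      (∀ k, w k ∈ Lᗮ) ∧ Tendsto y atTop (𝓝 x) ∧ Tendsto (fun k => u k + w k) atTop (𝓝 v) := by
  obtain ⟨xs, vs, hxs, hvs, hxs_lim, hvs_lim⟩ := hv
  have hpos : ∀ k : ℕ, (0 : ℝ) < 1 / (k + 1) := fun k => by positivity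
  choose y hyD hyx u hu w hw huw using fun k =>
    exists_approx_of_mem_frechetNormalCone_inter hD L (hxs k).1 (hxs k).2 (hvs k) (hpos k) (hpos k)
  refine ⟨y, u, w, hyD, hu, hw, ?_, ?_⟩
  · simpa using hxs_lim.add (squeeze_zero_norm hyx tendsto_one_div_add_atTop_nhds_zero_nat)
  · simpa using hvs_lim.sub (squeeze_zero_norm huw tendsto_one_div_add_atTop_nhds_zero_nat)

section Limit

variable {D : Set V} {M : Submodule ℝ V} {x v : V} {y u w : ℕ → V}

theorem exists_frequently_norm_le_of_tendsto_add (hyD : ∀ k, y k ∈ D)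
    (hu : ∀ k, u k ∈ frechetNormalCone D (y k)) (hw : ∀ k, w k ∈ M)
    (hy : Tendsto y atTop (𝓝 x)) (huw : Tendsto (fun k => u k + w k) atTop (𝓝 v))
    (hCQ : limitingNormalCone D x ∩ -(M : Set V) = {0}) :
    ∃ C, ∃ᶠ k in atTop, ‖u k‖ ≤ C := by
  by_contra! h
  have hnorm : Tendsto (fun k => ‖u k‖) atTop atTop :=
    tendsto_atTop.mpr fun C => (h C).mono fun _ => le_of_lt
  have hunit : ∀ᶠ k in atTop, ‖‖u k‖⁻¹ • u k‖ = 1 := (h 0).mono fun k hk => by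
    rw [norm_smul, norm_inv, norm_norm, inv_mul_cancel₀ hk.ne']
  obtain ⟨ū, -, φ, hφ, hlim⟩ := tendsto_subseq_of_frequently_bounded
    (isBounded_closedBall (x := (0 : V)) (r := 1))
    (hunit.frequently.mono fun k hk => mem_closedBall_zero_iff.mpr hk.le)
  have hū : ‖ū‖ = 1 := tendsto_nhds_unique hlim.norm <|
    tendsto_const_nhds.congr' <| (hφ.tendsto_atTop.eventually hunit).mono fun _ hk => hk.symm
  have hūN : ū ∈ limitingNormalCone D x := ⟨y ∘ φ, _, fun _ => hyD _,
    fun _ => smul_mem_frechetNormalCone (hu _) (by positivity), hy.comp hφ.tendsto_atTop, hlim⟩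
  have hw_lim : Tendsto (fun k => ‖u (φ k)‖⁻¹ • w (φ k)) atTop (𝓝 (-ū)) := by
    have := ((tendsto_inv_atTop_zero.comp hnorm).smul huw).comp hφ.tendsto_atTop
    simpa [smul_add] using this.sub hlim
  have hūM : -ū ∈ M := M.closed_of_finiteDimensional.mem_of_tendsto hw_lim
    (Eventually.of_forall fun _ => M.smul_mem _ (hw _))
  have hū0 : ū ∈ ({0} : Set V) := hCQ ▸ ⟨hūN, Set.mem_neg.mpr hūM⟩
  norm_num [Set.mem_singleton_iff.mp hū0] at hū

theorem mem_limitingNormalCone_add_of_tendsto (hyD : ∀ k, y k ∈ D)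
    (hu : ∀ k, u k ∈ frechetNormalCone D (y k)) (hw : ∀ k, w k ∈ M)
    (hy : Tendsto y atTop (𝓝 x)) (huw : Tendsto (fun k => u k + w k) atTop (𝓝 v))
    (hCQ : limitingNormalCone D x ∩ -(M : Set V) = {0}) :
    v ∈ limitingNormalCone D x + (M : Set V) := by
  obtain ⟨C, hC⟩ := exists_frequently_norm_le_of_tendsto_add hyD hu hw hy huw hCQ
  obtain ⟨ū, -, φ, hφ, hlim⟩ := tendsto_subseq_of_frequently_bounded
    (isBounded_closedBall (x := (0 : V)) (r := C))
    (hC.mono fun k hk => mem_closedBall_zero_iff.mpr hk)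
  have hūN : ū ∈ limitingNormalCone D x :=
    ⟨y ∘ φ, u ∘ φ, fun _ => hyD _, fun _ => hu _, hy.comp hφ.tendsto_atTop, hlim⟩
  have hw_lim : Tendsto (fun k => w (φ k)) atTop (𝓝 (v - ū)) := by
    simpa using (huw.comp hφ.tendsto_atTop).sub hlim
  have hwM : v - ū ∈ M := M.closed_of_finiteDimensional.mem_of_tendsto hw_lim
    (Eventually.of_forall fun _ => hw _)
  exact ⟨ū, hūN, v - ū, hwM, add_sub_cancel _ _⟩

end Limit

end FiniteDimensional

end

theorem normalCone_intersection_subspace_general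
    {V : Type*} [NormedAddCommGroup V] [InnerProductSpace ℝ V]
    [FiniteDimensional ℝ V]
    (D : Set V) (hD : IsClosed D) (L : Submodule ℝ V)
    (xstar : V)
    (hCQ : limitingNormalCone D xstar ∩ (-(Lᗮ : Set V)) = {0}) :
    limitingNormalCone (D ∩ (L : Set V)) xstar ⊆
      limitingNormalCone D xstar + (Lᗮ : Set V) := by
  intro v hv
  obtain ⟨y, u, w, hyD, hu, hw, hy, huw⟩ := exists_seq_of_mem_limitingNormalCone_inter hD L hv
  exact mem_limitingNormalCone_add_of_tendsto hyD hu hw hy huw hCQ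

/-- Under the constraint qualification `N_D(x*) ∩ (−N_L(x*)) = {0}` (with
`N_L(x*) = Lᗮ`), the limiting normal cone of the intersection of a closed set `D`
with a linear subspace `L` satisfies `N_{D∩L}(x*) ⊆ N_D(x*) + Lᗮ`. -/
theorem normalCone_intersection_subspace
    {V : Type*} [NormedAddCommGroup V] [InnerProductSpace ℝ V]
    [FiniteDimensional ℝ V]
    (D : Set V) (hD : IsClosed D) (L : Submodule ℝ V)
    (xstar : V) (hxD : xstar ∈ D) (hxL : xstar ∈ L)
    (hCQ : limitingNormalCone D xstar ∩ (-(Lᗮ : Set V)) = {0}) :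
    limitingNormalCone (D ∩ (L : Set V)) xstar ⊆
      limitingNormalCone D xstar + (Lᗮ : Set V) :=
  normalCone_intersection_subspace_general D hD L xstar hCQ
end

section
/- If a sequence (x^i) lies in a compact set, consecutive differences ‖x^{i+1} − x^i‖ → 0, and the set of accumulation points is finite, then the sequence converges. -/
/-!
Pick a cluster point `p` and `ε > 0` such that no other cluster point lies within `3ε` of `p`.
Eventually the steps are shorter than `ε` and, by compactness, every term is within `ε` of some
cluster point. Once a term is within `ε` of `p` (which happens infinitely often), the next term
is within `ε` of a cluster point at distance `< 3ε` from `p`, that is, of `p` itself. So the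
sequence eventually stays near `p`, `p` is its only cluster point, and compactness gives
convergence.
-/

open Filter Metric Topology

section

variable {X : Type*}

theorem IsCompact.eventually_mem_thickening_mapClusterPt [PseudoMetricSpace X] {ι : Type*}
    {l : Filter ι} {u : ι → X} {K : Set X} (hK : IsCompact K) (huK : ∀ᶠ i in l, u i ∈ K)
    {δ : ℝ} (hδ : 0 < δ) : ∀ᶠ i in l, u i ∈ thickening δ {y | MapClusterPt y l u} :=
  hK.tendsto_nhdsSet_of_mapClusterPt huK (fun _ _ hy => hy)
    (isOpen_thickening.mem_nhdsSet.2 (self_subset_thickening hδ _))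

theorem eventually_dist_lt_of_mapClusterPt_of_ball_inter_subset [PseudoMetricSpace X]
    {u : ℕ → X} {S : Set X} {p : X} {ε : ℝ} (hp : MapClusterPt p atTop u)
    (hS : ball p (3 * ε) ∩ S ⊆ {p}) (hstep : ∀ᶠ i in atTop, dist (u (i + 1)) (u i) < ε)
    (hnear : ∀ᶠ i in atTop, u i ∈ thickening ε S) : ∀ᶠ i in atTop, dist (u i) p < ε := by
  obtain ⟨N, hN⟩ := eventually_atTop.1 (hstep.and hnear)
  have hε : 0 < ε := dist_nonneg.trans_lt (hN N le_rfl).1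
  obtain ⟨i₀, hi₀N, hi₀⟩ := frequently_atTop.1 (hp.frequently (ball_mem_nhds p hε)) N
  refine eventually_atTop.2 ⟨i₀, fun i hi => ?_⟩
  induction i, hi using Nat.le_induction with
  | base => exact hi₀
  | succ i hi ih =>
    obtain ⟨c, hcS, hc⟩ := mem_thickening_iff.1 (hN (i + 1) (by omega)).2
    have hcp : dist c p < 3 * ε :=
      calc dist c p ≤ dist c (u (i + 1)) + dist (u (i + 1)) (u i) + dist (u i) p :=
            dist_triangle4 _ _ _ _
        _ < ε + ε + ε := by
            rw [dist_comm c]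
            gcongr
            exact (hN i (by omega)).1
        _ = 3 * ε := by ring
    obtain rfl : c = p := hS ⟨hcp, hcS⟩
    exact hc

theorem tendsto_of_tendsto_dist_succ_of_finite_mapClusterPt [MetricSpace X] {u : ℕ → X}
    {K : Set X} (hK : IsCompact K) (huK : ∀ᶠ i in atTop, u i ∈ K)
    (hstep : Tendsto (fun i => dist (u (i + 1)) (u i)) atTop (𝓝 0))
    (hfin : {y | MapClusterPt y atTop u}.Finite) : ∃ p, Tendsto u atTop (𝓝 p) := by
  obtain ⟨p, -, hp⟩ := hK.exists_mapClusterPt_of_frequently huK.frequently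
  obtain ⟨ε, hε, hisol⟩ := exists_ball_inter_eq_singleton_of_mem_discrete hfin.isDiscrete hp
  have hε3 : 0 < ε / 3 := by positivity
  have htrap : ∀ᶠ i in atTop, dist (u i) p < ε / 3 :=
    eventually_dist_lt_of_mapClusterPt_of_ball_inter_subset hp
      (by rw [mul_div_cancel₀ ε three_ne_zero, hisol]) (hstep.eventually (eventually_lt_nhds hε3))
      (hK.eventually_mem_thickening_mapClusterPt huK hε3)
  refine ⟨p, hK.tendsto_nhds_of_unique_mapClusterPt huK fun q _ hq => hisol.subset ⟨?_, hq⟩⟩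
  obtain ⟨i, hiq, hip⟩ := ((hq.frequently (ball_mem_nhds q hε3)).and_eventually htrap).exists
  calc dist q p ≤ dist (u i) q + dist (u i) p := dist_triangle_left _ _ _
    _ < ε / 3 + ε / 3 := add_lt_add hiq hip
    _ < ε := by linarith

end

theorem converges_of_finite_cluster_points_general
    {V : Type*} [NormedAddCommGroup V]
    (x : ℕ → V) (K : Set V) (hK : IsCompact K) (hxK : ∀ i, x i ∈ K)
    (hdiff : Filter.Tendsto (fun i => ‖x (i + 1) - x i‖) Filter.atTop (nhds 0))
    (hfin : {y : V | MapClusterPt y Filter.atTop x}.Finite) :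
    ∃ l : V, Filter.Tendsto x Filter.atTop (nhds l) :=
  tendsto_of_tendsto_dist_succ_of_finite_mapClusterPt hK (.of_forall hxK)
    (by simpa only [dist_eq_norm] using hdiff) hfin

/-- If a sequence in a finite-dimensional normed space lies in a compact set, its
consecutive differences tend to zero, and its set of accumulation points is
finite, then it converges. -/
theorem converges_of_finite_cluster_points
    {V : Type*} [NormedAddCommGroup V] [NormedSpace ℝ V] [FiniteDimensional ℝ V]
    (x : ℕ → V) (K : Set V) (hK : IsCompact K) (hxK : ∀ i, x i ∈ K)
    (hdiff : Filter.Tendsto (fun i => ‖x (i + 1) - x i‖) Filter.atTop (nhds 0))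
    (hfin : {y : V | MapClusterPt y Filter.atTop x}.Finite) :
    ∃ l : V, Filter.Tendsto x Filter.atTop (nhds l) :=
  converges_of_finite_cluster_points_general x K hK hxK hdiff hfin
end
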